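/- arXiv:0712.1622 — 3 statements merged into one kernel-verified Lean document; each statement's English description precedes it below -/
import Mathlib

section
/- If G ≤ Sym(X) acts arc-transitively on the Johnson graph J(n,2) (with |X| = n ≥ 4), then G is 3-transitive on X. -/
/-!
Distinct points `a, b, c` give the arc `({a, b}, {b, c})` of `J(n, 2)`. A permutation sending
this arc to `({a', b'}, {b', c'})` must send the common point `b` to `b'`, and then `a` to `a'`
and `c` to `c'`; so arc-transitivity yields transitivity on ordered triples.
-/

namespace Finset

variable {α : Type*} [DecidableEq α]

theorem pair_inter_pair_eq_singleton {a b c : α} (hac : a ≠ c) :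
    ({a, b} : Finset α) ∩ {b, c} = {b} := by
  ext x
  simp only [mem_inter, mem_insert, mem_singleton]
  grind

theorem pair_ne_pair {a b c : α} (hab : a ≠ b) (hac : a ≠ c) :
    ({a, b} : Finset α) ≠ {b, c} := by
  intro h
  have ha : a ∈ ({b, c} : Finset α) := h ▸ mem_insert_self a {b}
  simp only [mem_insert, mem_singleton] at ha
  tauto

theorem eq_of_pair_eq_pair_of_pair_eq_pair {x y z x' y' z' : α}
    (hxy : x ≠ y) (hxz : x ≠ z) (hyz : y ≠ z)
    (h₁ : ({x, y} : Finset α) = {x', y'}) (h₂ : ({y, z} : Finset α) = {y', z'}) :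
    x = x' ∧ y = y' ∧ z = z' := by
  simp only [Finset.ext_iff, mem_insert, mem_singleton] at h₁ h₂
  have hx := (h₁ x).1 (.inl rfl)
  have hx' := mt (h₂ x).2 (by tauto)
  have hy := (h₁ y).1 (.inr rfl)
  have hz := (h₂ z).1 (.inr rfl)
  have hz' := mt (h₁ z).2 (by tauto)
  grind

end Finset

theorem three_transitive_of_johnson2_arc_transitive_general (n : ℕ)
    (G : Subgroup (Equiv.Perm (Fin n)))
    (harc : ∀ A B A' B' : Finset (Fin n),
      A.card = 2 → B.card = 2 → A ≠ B → (A ∩ B).card = 1 →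
      A'.card = 2 → B'.card = 2 → A' ≠ B' → (A' ∩ B').card = 1 →
      ∃ g ∈ G, A.image ⇑g = A' ∧ B.image ⇑g = B') :
    ∀ u v : Fin 3 → Fin n, Function.Injective u → Function.Injective v →
      ∃ g ∈ G, ∀ i, g (u i) = v i := by
  intro u v hu hv
  have path_is_arc {w : Fin 3 → Fin n} (hw : Function.Injective w) :
      ({w 0, w 1} : Finset _).card = 2 ∧ ({w 1, w 2} : Finset _).card = 2 ∧
        ({w 0, w 1} : Finset _) ≠ {w 1, w 2} ∧
        (({w 0, w 1} : Finset _) ∩ {w 1, w 2}).card = 1 := by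
    have h01 : w 0 ≠ w 1 := hw.ne (by decide)
    have h02 : w 0 ≠ w 2 := hw.ne (by decide)
    have h12 : w 1 ≠ w 2 := hw.ne (by decide)
    exact ⟨Finset.card_pair h01, Finset.card_pair h12, Finset.pair_ne_pair h01 h02,
      by rw [Finset.pair_inter_pair_eq_singleton h02, Finset.card_singleton]⟩
  obtain ⟨hA, hB, hAB, hAB₁⟩ := path_is_arc hu
  obtain ⟨hA', hB', hAB', hAB₁'⟩ := path_is_arc hv
  obtain ⟨g, hg, h₁, h₂⟩ := harc _ _ _ _ hA hB hAB hAB₁ hA' hB' hAB' hAB₁'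
  simp only [Finset.image_insert, Finset.image_singleton] at h₁ h₂
  have hgu := g.injective.comp hu
  obtain ⟨h0, h1, h2⟩ := Finset.eq_of_pair_eq_pair_of_pair_eq_pair
    (hgu.ne (by decide : (0 : Fin 3) ≠ 1)) (hgu.ne (by decide : (0 : Fin 3) ≠ 2))
    (hgu.ne (by decide : (1 : Fin 3) ≠ 2)) h₁ h₂
  exact ⟨g, hg, fun i => by fin_cases i <;> assumption⟩

/-- If `G ≤ Sym(X)` acts arc-transitively on the Johnson graph `J(n,2)`
(with `|X| = n ≥ 4`), then `G` is `3`-transitive on `X`. -/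
theorem three_transitive_of_johnson2_arc_transitive (n : ℕ) (hn : 4 ≤ n)
    (G : Subgroup (Equiv.Perm (Fin n)))
    (harc : ∀ A B A' B' : Finset (Fin n),
      A.card = 2 → B.card = 2 → A ≠ B → (A ∩ B).card = 1 →
      A'.card = 2 → B'.card = 2 → A' ≠ B' → (A' ∩ B').card = 1 →
      ∃ g ∈ G, A.image ⇑g = A' ∧ B.image ⇑g = B') :
    ∀ u v : Fin 3 → Fin n, Function.Injective u → Function.Injective v →
      ∃ g ∈ G, ∀ i, g (u i) = v i :=
  three_transitive_of_johnson2_arc_transitive_general n G harc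
end

section
/- Let q be a prime power with q ≡ 1 (mod 4). Then PSL(2,q), acting on unordered pairs of points of the projective line PG(1,q), has exactly two orbits on edges of the Johnson graph J(q+1,2) (pairs of 2-subsets meeting in one point), and these two orbits have equal size q(q²−1)/4. -/
open Matrix

/-- The projective line over a field `F`. -/
abbrev ProjLine (F : Type*) [Field F] := Projectivization F (Fin 2 → F)

/-- The action of `SL(2,F)` on the projective line. -/
noncomputable def sl2Map {F : Type*} [Field F] (g : SpecialLinearGroup (Fin 2) F) :
    ProjLine F → ProjLine F :=
  Projectivization.map
    ((Matrix.GeneralLinearGroup.toLin (SpecialLinearGroup.toGL g)).toLinearEquiv.toLinearMap)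
    ((Matrix.GeneralLinearGroup.toLin (SpecialLinearGroup.toGL g)).toLinearEquiv.injective)

/-!
An edge `{{x, y}, {x, z}}` of `J(q + 1, 2)` is a centre `x` together with the unordered pair
`{y, z}`. Write it as `x = [u]`, `y = [v]`, `z = [u + v]`. The pair `(u, v)` is unique up to a
common scalar `t` and the swap `(u, v) ↦ (u, -(u + v))`, which multiply `det (u, v)` by `t²` and
by `-1`. As `-1` is a square when `q ≡ 1 (mod 4)`, the square class of `det (u, v)` is an
invariant of the edge; since `SL(2, q)` is transitive on pairs with a given determinant, the two
square classes are the two orbits. For fixed `d ≠ 0` there are `(q² - 1) q` pairs of determinant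
`d`, and each edge has exactly four of them (`t² = 1` or `t² = -1`), so each orbit has
`q (q² - 1) / 4` edges.
-/

open Finset

section JohnsonEdges

def johnsonEdges (X : Type*) [DecidableEq X] : Set (Sym2 (Finset X)) :=
  {e | ∃ A B : Finset X, e = s(A, B) ∧ A.card = 2 ∧ B.card = 2 ∧ (A ∩ B).card = 1}

variable {X : Type*} [DecidableEq X]

lemma Finset.pair_eq_pair_iff {x y z w : X} :
    ({x, y} : Finset X) = {z, w} ↔ x = z ∧ y = w ∨ x = w ∧ y = z := by
  rw [← coe_inj, coe_pair, coe_pair, Set.pair_eq_pair_iff]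

lemma Finset.exists_eq_pair_of_mem {A : Finset X} {x : X} (hA : #A = 2) (hx : x ∈ A) :
    ∃ y, y ≠ x ∧ A = {x, y} := by
  obtain ⟨y, hy⟩ := card_eq_one.mp (by rw [card_erase_of_mem hx, hA] : #(A.erase x) = 1)
  exact ⟨y, ne_of_mem_erase (hy ▸ mem_singleton_self y), by rw [← insert_erase hx, hy]⟩

lemma mem_johnsonEdges_iff {e : Sym2 (Finset X)} :
    e ∈ johnsonEdges X ↔
      ∃ x y z, x ≠ y ∧ x ≠ z ∧ y ≠ z ∧ e = s({x, y}, {x, z}) := by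
  constructor
  · rintro ⟨A, B, rfl, hA, hB, hAB⟩
    obtain ⟨x, hx⟩ := card_eq_one.mp hAB
    have hxAB := mem_inter.mp (hx ▸ mem_singleton_self x)
    obtain ⟨y, hyx, rfl⟩ := exists_eq_pair_of_mem hA hxAB.1
    obtain ⟨z, hzx, rfl⟩ := exists_eq_pair_of_mem hB hxAB.2
    refine ⟨x, y, z, hyx.symm, hzx.symm, ?_, rfl⟩
    rintro rfl
    rw [inter_self, card_pair hyx.symm] at hAB
    exact absurd hAB (by norm_num)
  · rintro ⟨x, y, z, hxy, hxz, hyz, rfl⟩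
    have hinter : ({x, y} ∩ {x, z} : Finset X) = {x} := by
      ext w; simp only [mem_inter, mem_insert, mem_singleton]; grind
    exact ⟨_, _, rfl, card_pair hxy, card_pair hxz, by rw [hinter, card_singleton]⟩

lemma eq_of_sym2_pair_eq {x y z x' y' z' : X} (hxy : x ≠ y) (hxz : x ≠ z) (hyz : y ≠ z)
    (h : s(({x, y} : Finset X), {x, z}) = s({x', y'}, {x', z'})) :
    x' = x ∧ (y' = y ∧ z' = z ∨ y' = z ∧ z' = y) := by
  rw [Sym2.eq_iff, pair_eq_pair_iff, pair_eq_pair_iff, pair_eq_pair_iff, pair_eq_pair_iff] at h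
  grind

end JohnsonEdges

section Squares

variable {F : Type*} [Field F]

lemma isSquare_sq_mul_iff {r d : F} (hr : r ≠ 0) : IsSquare (r ^ 2 * d) ↔ IsSquare d := by
  refine ⟨fun h => ?_, fun ⟨y, hy⟩ => ⟨r * y, by rw [hy]; ring⟩⟩
  simpa [hr] using h.div (IsSquare.sq r)

variable [Fintype F]

lemma isSquare_mul_of_not_isSquare {a b : F} (ha : ¬IsSquare a) (hb : ¬IsSquare b) :
    IsSquare (a * b) := by
  classical
  have ha0 : a ≠ 0 := by rintro rfl; exact ha IsSquare.zero
  have hb0 : b ≠ 0 := by rintro rfl; exact hb IsSquare.zero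
  rw [← quadraticChar_one_iff_isSquare (mul_ne_zero ha0 hb0), map_mul,
    quadraticChar_neg_one_iff_not_isSquare.mpr ha, quadraticChar_neg_one_iff_not_isSquare.mpr hb]
  norm_num

variable [DecidableEq F]

lemma card_sq_eq_of_isSquare {a : F} (hF : ringChar F ≠ 2) (ha : a ≠ 0) (hsq : IsSquare a) :
    #{t : F | t ^ 2 = a} = 2 := by
  have := quadraticChar_card_sqrts hF a
  rw [(quadraticChar_one_iff_isSquare ha).mpr hsq, Set.toFinset_ofPred] at this
  exact_mod_cast this

end Squares

section Det2

variable {F : Type*} [Field F]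

def det2 (u v : Fin 2 → F) : F := (Matrix.of ![u, v]).det

lemma det2_eq (u v : Fin 2 → F) : det2 u v = u 0 * v 1 - u 1 * v 0 := det_fin_two _

lemma det2_ne_zero_iff {u v : Fin 2 → F} : det2 u v ≠ 0 ↔ LinearIndependent F ![u, v] := by
  rw [det2, ← isUnit_iff_ne_zero, ← isUnit_iff_isUnit_det,
    ← linearIndependent_rows_iff_isUnit]
  exact Iff.rfl

lemma det2_eq_zero_iff {u v : Fin 2 → F} (hu : u ≠ 0) :
    det2 u v = 0 ↔ ∃ a : F, a • u = v := by
  rw [← not_ne_iff, det2_ne_zero_iff, LinearIndependent.pair_iff' hu]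
  push Not
  rfl

lemma det2_smul_smul (a b : F) (u v : Fin 2 → F) :
    det2 (a • u) (b • v) = a * b * det2 u v := by
  simp only [det2_eq, Pi.smul_apply, smul_eq_mul]; ring

lemma det2_smul_right (a : F) (u v : Fin 2 → F) : det2 u (a • v) = a * det2 u v := by
  simp only [det2_eq, Pi.smul_apply, smul_eq_mul]; ring

lemma det2_self (u : Fin 2 → F) : det2 u u = 0 := by
  rw [det2_eq]; ring

lemma det2_add_right (u v w : Fin 2 → F) : det2 u (v + w) = det2 u v + det2 u w := by
  simp only [det2_eq, Pi.add_apply]; ring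

lemma det2_neg_right (u v : Fin 2 → F) : det2 u (-v) = -det2 u v := by
  simp only [det2_eq, Pi.neg_apply]; ring

lemma det2_neg_add_right (u v : Fin 2 → F) : det2 u (-(u + v)) = -det2 u v := by
  simp only [det2_eq, Pi.neg_apply, Pi.add_apply]; ring

lemma det2_comm (u v : Fin 2 → F) : det2 v u = -det2 u v := by
  rw [det2_eq, det2_eq]; ring

lemma det2_mulVec (M : Matrix (Fin 2) (Fin 2) F) (u v : Fin 2 → F) :
    det2 (M *ᵥ u) (M *ᵥ v) = M.det * det2 u v := by
  simp only [det2_eq, det_fin_two, mulVec, dotProduct, Fin.sum_univ_two]; ring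

lemma det2_smul_add_det2_smul (a b c : Fin 2 → F) :
    det2 c b • a + det2 a c • b = det2 a b • c := by
  ext i; fin_cases i <;> simp [det2_eq] <;> ring

lemma ne_zero_of_det2_ne_zero {u v : Fin 2 → F} (h : det2 u v ≠ 0) :
    u ≠ 0 ∧ v ≠ 0 ∧ u + v ≠ 0 := by
  refine ⟨?_, ?_, ?_⟩ <;> rintro h0
  · exact h (by simp [det2_eq, h0])
  · exact h (by simp [det2_eq, h0])
  · exact h (by simp [det2_eq, eq_neg_of_add_eq_zero_left h0]; ring)

lemma exists_det2_eq_one {u : Fin 2 → F} (hu : u ≠ 0) : ∃ w, det2 u w = 1 := by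
  obtain ⟨i, hi⟩ := Function.ne_iff.mp hu
  fin_cases i
  · exact ⟨![0, (u 0)⁻¹], by simp_all [det2_eq]⟩
  · exact ⟨![-(u 1)⁻¹, 0], by simp_all [det2_eq]⟩

lemma det2_specialLinearGroup_smul (g : SpecialLinearGroup (Fin 2) F) (u v : Fin 2 → F) :
    det2 (g • u) (g • v) = det2 u v := by
  change det2 ((g : Matrix (Fin 2) (Fin 2) F) *ᵥ u) (g *ᵥ v) = _
  rw [det2_mulVec, g.det_coe, one_mul]

lemma exists_sl2_smul_eq {u v u' v' : Fin 2 → F} (h : det2 u v ≠ 0)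
    (h' : det2 u' v' = det2 u v) :
    ∃ g : SpecialLinearGroup (Fin 2) F, g • u = u' ∧ g • v = v' := by
  set M := (Matrix.of ![u, v])ᵀ
  set M' := (Matrix.of ![u', v'])ᵀ
  have hM : IsUnit M.det := by rw [det_transpose]; exact isUnit_iff_ne_zero.mpr h
  have hdet : (M' * M⁻¹).det = 1 := by
    rw [det_mul, det_nonsing_inv, Ring.inverse_eq_inv', det_transpose, det_transpose]
    change det2 u' v' * (det2 u v)⁻¹ = 1
    rw [h', mul_inv_cancel₀ h]
  have hcol (i : Fin 2) : (M' * M⁻¹) *ᵥ M.col i = M'.col i := by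
    rw [← mulVec_single_one, ← mulVec_single_one, mulVec_mulVec, mul_assoc,
      nonsing_inv_mul M hM, mul_one]
  exact ⟨⟨M' * M⁻¹, hdet⟩, hcol 0, hcol 1⟩

end Det2

section ToProjLine

variable {F : Type*} [Field F]

/-- `toProjLine 0` is a junk value. -/
noncomputable def toProjLine (u : Fin 2 → F) : ProjLine F :=
  open Classical in
  if hu : u = 0 then Projectivization.mk F 1 one_ne_zero else Projectivization.mk F u hu

lemma toProjLine_of_ne_zero {u : Fin 2 → F} (hu : u ≠ 0) :
    toProjLine u = Projectivization.mk F u hu :=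
  dif_neg hu

lemma toProjLine_eq_iff {u v : Fin 2 → F} (hu : u ≠ 0) (hv : v ≠ 0) :
    toProjLine u = toProjLine v ↔ ∃ a : F, a • v = u := by
  rw [toProjLine_of_ne_zero hu, toProjLine_of_ne_zero hv, Projectivization.mk_eq_mk_iff']

lemma toProjLine_ne_iff {u v : Fin 2 → F} (hu : u ≠ 0) (hv : v ≠ 0) :
    toProjLine u ≠ toProjLine v ↔ det2 u v ≠ 0 := by
  rw [ne_eq, toProjLine_eq_iff hu hv, ← det2_eq_zero_iff hv, det2_comm, neg_eq_zero]

lemma toProjLine_smul {a : F} (ha : a ≠ 0) (u : Fin 2 → F) :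
    toProjLine (a • u) = toProjLine u := by
  rcases eq_or_ne u 0 with rfl | hu
  · rw [smul_zero]
  · exact (toProjLine_eq_iff (smul_ne_zero ha hu) hu).mpr ⟨a, rfl⟩

lemma toProjLine_neg (u : Fin 2 → F) : toProjLine (-u) = toProjLine u := by
  simpa using toProjLine_smul (neg_ne_zero.mpr one_ne_zero) u

lemma toProjLine_rep (x : ProjLine F) : toProjLine x.rep = x := by
  rw [toProjLine_of_ne_zero x.rep_nonzero, Projectivization.mk_rep]

lemma smul_toProjLine (g : SpecialLinearGroup (Fin 2) F) {u : Fin 2 → F} (hu : u ≠ 0) :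
    g • toProjLine u = toProjLine (g • u) := by
  rw [toProjLine_of_ne_zero hu, Projectivization.smul_mk,
    toProjLine_of_ne_zero ((smul_ne_zero_iff_ne g).mpr hu)]

lemma toProjLine_ne_of_det2_ne_zero {u v : Fin 2 → F} (h : det2 u v ≠ 0) :
    toProjLine u ≠ toProjLine v ∧ toProjLine u ≠ toProjLine (u + v) ∧
      toProjLine v ≠ toProjLine (u + v) := by
  obtain ⟨hu, hv, huv⟩ := ne_zero_of_det2_ne_zero h
  refine ⟨(toProjLine_ne_iff hu hv).mpr h, ?_, ?_⟩
  · rwa [toProjLine_ne_iff hu huv, det2_add_right, det2_self, zero_add]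
  · rwa [toProjLine_ne_iff hv huv, det2_add_right, det2_self, add_zero, det2_comm, neg_ne_zero]

lemma eq_smul_of_toProjLine_eq {u v u' v' : Fin 2 → F} (h : det2 u v ≠ 0)
    (h' : det2 u' v' ≠ 0)
    (h₁ : toProjLine u' = toProjLine u) (h₂ : toProjLine v' = toProjLine v)
    (h₃ : toProjLine (u' + v') = toProjLine (u + v)) :
    ∃ t : F, u' = t • u ∧ v' = t • v := by
  obtain ⟨hu, hv, huv⟩ := ne_zero_of_det2_ne_zero h
  obtain ⟨hu', hv', huv'⟩ := ne_zero_of_det2_ne_zero h'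
  obtain ⟨a, ha⟩ := (toProjLine_eq_iff hu' hu).mp h₁
  obtain ⟨b, hb⟩ := (toProjLine_eq_iff hv' hv).mp h₂
  obtain ⟨c, hc⟩ := (toProjLine_eq_iff huv' huv).mp h₃
  subst ha hb
  have hlin : (a - c) • u + (b - c) • v = 0 := by
    linear_combination (norm := module) -hc
  have hli : LinearIndependent F ![u, v] := det2_ne_zero_iff.mp h
  obtain ⟨hac, hbc⟩ := LinearIndependent.pair_iff.mp hli _ _ hlin
  obtain rfl := sub_eq_zero.mp hac
  obtain rfl := sub_eq_zero.mp hbc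
  exact ⟨_, rfl, rfl⟩

end ToProjLine

section VecEdge

variable {F : Type*} [Field F] [DecidableEq (ProjLine F)]

noncomputable def vecEdge (u v : Fin 2 → F) : Sym2 (Finset (ProjLine F)) :=
  s({toProjLine u, toProjLine v}, {toProjLine u, toProjLine (u + v)})

lemma vecEdge_smul {a : F} (ha : a ≠ 0) (u v : Fin 2 → F) :
    vecEdge (a • u) (a • v) = vecEdge u v := by
  rw [vecEdge, vecEdge, ← smul_add, toProjLine_smul ha, toProjLine_smul ha, toProjLine_smul ha]

lemma vecEdge_swap (u v : Fin 2 → F) : vecEdge u (-(u + v)) = vecEdge u v := by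
  rw [vecEdge, vecEdge, show u + -(u + v) = -v by abel, toProjLine_neg, toProjLine_neg]
  exact Sym2.eq_swap

lemma smul_vecEdge (g : SpecialLinearGroup (Fin 2) F) {u v : Fin 2 → F} (h : det2 u v ≠ 0) :
    (vecEdge u v).map (Finset.image (g • ·)) = vecEdge (g • u) (g • v) := by
  obtain ⟨hu, hv, huv⟩ := ne_zero_of_det2_ne_zero h
  simp only [vecEdge, Sym2.map_mk, image_insert, image_singleton, smul_toProjLine g hu,
    smul_toProjLine g hv, smul_toProjLine g huv, smul_add]

lemma vecEdge_mem_johnsonEdges {u v : Fin 2 → F} (h : det2 u v ≠ 0) :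
    vecEdge u v ∈ johnsonEdges (ProjLine F) := by
  obtain ⟨hxy, hxz, hyz⟩ := toProjLine_ne_of_det2_ne_zero h
  exact mem_johnsonEdges_iff.mpr ⟨_, _, _, hxy, hxz, hyz, rfl⟩

lemma exists_vecEdge_eq {e : Sym2 (Finset (ProjLine F))} (he : e ∈ johnsonEdges (ProjLine F)) :
    ∃ u v, det2 u v ≠ 0 ∧ e = vecEdge u v := by
  obtain ⟨x, y, z, hxy, hxz, hyz, rfl⟩ := mem_johnsonEdges_iff.mp he
  have hdet {p p' : ProjLine F} (h : p ≠ p') : det2 p.rep p'.rep ≠ 0 := by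
    rwa [← toProjLine_ne_iff p.rep_nonzero p'.rep_nonzero, toProjLine_rep, toProjLine_rep]
  have hab := hdet hxy
  have hac := hdet hxz
  have hcb := hdet hyz.symm
  refine ⟨det2 z.rep y.rep • x.rep, det2 x.rep z.rep • y.rep, ?_, ?_⟩
  · rw [det2_smul_smul]
    exact mul_ne_zero (mul_ne_zero hcb hac) hab
  · rw [vecEdge, det2_smul_add_det2_smul, toProjLine_smul hcb, toProjLine_smul hac,
      toProjLine_smul hab, toProjLine_rep, toProjLine_rep, toProjLine_rep]

lemma eq_smul_of_vecEdge_eq {u v u' v' : Fin 2 → F} (h : det2 u v ≠ 0) (h' : det2 u' v' ≠ 0)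
    (he : vecEdge u' v' = vecEdge u v) :
    ∃ t : F, u' = t • u ∧ (v' = t • v ∨ v' = -(t • (u + v))) := by
  obtain ⟨hxy, hxz, hyz⟩ := toProjLine_ne_of_det2_ne_zero h
  obtain ⟨hx, ⟨hy, hz⟩ | ⟨hy, hz⟩⟩ := eq_of_sym2_pair_eq hxy hxz hyz he.symm
  · obtain ⟨t, rfl, rfl⟩ := eq_smul_of_toProjLine_eq h h' hx hy hz
    exact ⟨t, rfl, Or.inl rfl⟩
  · have h'' : det2 u' (-(u' + v')) ≠ 0 := by
      rwa [det2_neg_right, det2_add_right, det2_self, zero_add, neg_ne_zero]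
    obtain ⟨t, rfl, ht⟩ := eq_smul_of_toProjLine_eq h h'' hx (by rwa [toProjLine_neg])
      (by rwa [show u' + -(u' + v') = -v' by abel, toProjLine_neg])
    exact ⟨t, rfl, Or.inr (by linear_combination (norm := module) -ht)⟩

end VecEdge

section EdgesOfDet

variable {F : Type*} [Field F] [DecidableEq (ProjLine F)]

lemma isSquare_det2_iff_of_vecEdge_eq (hm1 : IsSquare (-1 : F)) {u v u' v' : Fin 2 → F}
    (h : det2 u v ≠ 0) (h' : det2 u' v' ≠ 0) (he : vecEdge u' v' = vecEdge u v) :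
    IsSquare (det2 u' v') ↔ IsSquare (det2 u v) := by
  obtain ⟨t, rfl, rfl | rfl⟩ := eq_smul_of_vecEdge_eq h h' he
  · have ht : t ≠ 0 := by rintro rfl; simp [det2_eq] at h'
    rw [det2_smul_smul, ← sq, isSquare_sq_mul_iff ht]
  · have ht : t ≠ 0 := by rintro rfl; simp [det2_eq] at h'
    obtain ⟨c, hc⟩ := hm1
    have hc0 : c ≠ 0 := by rintro rfl; norm_num at hc
    rw [← smul_neg, det2_smul_smul, det2_neg_add_right,
      show t * t * -det2 u v = (c * t) ^ 2 * det2 u v by linear_combination (t ^ 2 * det2 u v) * hc,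
      isSquare_sq_mul_iff (mul_ne_zero hc0 ht)]

def edgesOfDet (d : F) : Set (Sym2 (Finset (ProjLine F))) :=
  {e | ∃ u v, det2 u v = d ∧ vecEdge u v = e}

lemma edgesOfDet_nonempty (d : F) : (edgesOfDet d).Nonempty :=
  ⟨_, ![1, 0], ![0, d], by simp [det2_eq], rfl⟩

lemma vecEdge_mem_edgesOfDet {u v : Fin 2 → F} {d s : F} (hs : s ≠ 0)
    (h : det2 u v = s ^ 2 * d) : vecEdge u v ∈ edgesOfDet d :=
  ⟨s⁻¹ • u, s⁻¹ • v, by rw [det2_smul_smul, h]; field_simp,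
    vecEdge_smul (inv_ne_zero hs) u v⟩

lemma disjoint_edgesOfDet (hm1 : IsSquare (-1 : F)) {a b : F} (ha : a ≠ 0) (hsa : IsSquare a)
    (hb : ¬IsSquare b) : Disjoint (edgesOfDet a) (edgesOfDet b) := by
  have hb0 : b ≠ 0 := by rintro rfl; exact hb IsSquare.zero
  rw [Set.disjoint_left]
  rintro _ ⟨u, v, rfl, rfl⟩ ⟨u', v', rfl, he⟩
  exact hb ((isSquare_det2_iff_of_vecEdge_eq hm1 ha hb0 he).mpr hsa)

lemma mem_edgesOfDet_iff {d : F} (hd : d ≠ 0) {e e' : Sym2 (Finset (ProjLine F))}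
    (he : e ∈ edgesOfDet d) :
    e' ∈ edgesOfDet d ↔
      ∃ g : SpecialLinearGroup (Fin 2) F, e' = e.map (Finset.image (g • ·)) := by
  obtain ⟨u, v, rfl, rfl⟩ := he
  constructor
  · rintro ⟨u', v', h', rfl⟩
    obtain ⟨g, rfl, rfl⟩ := exists_sl2_smul_eq hd h'
    exact ⟨g, (smul_vecEdge g hd).symm⟩
  · rintro ⟨g, rfl⟩
    exact ⟨g • u, g • v, det2_specialLinearGroup_smul g u v, (smul_vecEdge g hd).symm⟩

variable [Fintype F]

lemma johnsonEdges_eq_union {b : F} (hb : ¬IsSquare b) :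
    johnsonEdges (ProjLine F) = edgesOfDet 1 ∪ edgesOfDet b := by
  have hb0 : b ≠ 0 := by rintro rfl; exact hb IsSquare.zero
  ext e
  constructor
  · intro he
    obtain ⟨u, v, h, rfl⟩ := exists_vecEdge_eq he
    by_cases hsq : IsSquare (det2 u v)
    · obtain ⟨r, hr⟩ := hsq
      have hr0 : r ≠ 0 := by rintro rfl; exact h (by rw [hr, mul_zero])
      exact Or.inl (vecEdge_mem_edgesOfDet hr0 (by rw [hr]; ring))
    · obtain ⟨r, hr⟩ := isSquare_mul_of_not_isSquare hsq hb
      have hr0 : r ≠ 0 := by rintro rfl; exact mul_ne_zero h hb0 (by rw [hr, mul_zero])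
      refine Or.inr (vecEdge_mem_edgesOfDet (div_ne_zero hr0 hb0) ?_)
      rw [div_pow, sq r, ← hr]
      field_simp
  · rintro (⟨u, v, h, rfl⟩ | ⟨u, v, h, rfl⟩)
    · exact vecEdge_mem_johnsonEdges (h ▸ one_ne_zero)
    · exact vecEdge_mem_johnsonEdges (h ▸ hb0)

end EdgesOfDet

section Counting

variable {F : Type*} [Field F] [Fintype F] [DecidableEq F]

lemma card_det2_eq_of_ne_zero {u : Fin 2 → F} (hu : u ≠ 0) (d : F) :
    #{v | det2 u v = d} = Fintype.card F := by
  obtain ⟨w, hw⟩ := exists_det2_eq_one hu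
  have hfib : ({v | det2 u v = d} : Finset _) = univ.image fun t : F => t • u + d • w := by
    ext v
    simp only [mem_filter, mem_univ, true_and, mem_image]
    constructor
    · intro hv
      have : det2 u (v - d • w) = 0 := by
        rw [sub_eq_add_neg, det2_add_right, det2_neg_right, det2_smul_right, hv, hw]
        ring
      obtain ⟨t, ht⟩ := (det2_eq_zero_iff hu).mp this
      exact ⟨t, by rw [ht, sub_add_cancel]⟩
    · rintro ⟨t, rfl⟩
      rw [det2_add_right, det2_smul_right, det2_smul_right, det2_self, hw]
      ring
  have hinj : Function.Injective fun t : F => t • u + d • w :=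
    fun s t hst => smul_left_injective F hu (add_right_cancel hst)
  rw [hfib, card_image_of_injective _ hinj, card_univ]

lemma card_det2_eq {d : F} (hd : d ≠ 0) :
    #{p : (Fin 2 → F) × (Fin 2 → F) | det2 p.1 p.2 = d} =
      (Fintype.card F ^ 2 - 1) * Fintype.card F := by
  have hzero : #{v | det2 (0 : Fin 2 → F) v = d} = 0 := by simp [det2_eq, hd.symm]
  calc #{p : (Fin 2 → F) × (Fin 2 → F) | det2 p.1 p.2 = d}
      = ∑ u, #{v | det2 u v = d} := by
        rw [card_filter, Fintype.sum_prod_type]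
        simp only [card_filter]
    _ = ∑ u ∈ univ.erase (0 : Fin 2 → F), Fintype.card F := by
        rw [← sum_erase (f := fun u => #{v | det2 u v = d}) univ hzero]
        exact sum_congr rfl fun u hu => card_det2_eq_of_ne_zero (ne_of_mem_erase hu) d
    _ = (Fintype.card F ^ 2 - 1) * Fintype.card F := by
        rw [sum_const, card_erase_of_mem (mem_univ _), card_univ, Fintype.card_fun,
          Fintype.card_fin, smul_eq_mul]

variable [DecidableEq (ProjLine F)]

lemma card_vecEdge_fiber (hF : ringChar F ≠ 2) (hm1 : IsSquare (-1 : F)) {u v : Fin 2 → F}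
    (h : det2 u v ≠ 0) :
    #{p : (Fin 2 → F) × (Fin 2 → F) |
      det2 p.1 p.2 = det2 u v ∧ vecEdge p.1 p.2 = vecEdge u v} = 4 := by
  have hu := (ne_zero_of_det2_ne_zero h).1
  have hfib : ({p | det2 p.1 p.2 = det2 u v ∧ vecEdge p.1 p.2 = vecEdge u v} : Finset _) =
      ({t | t ^ 2 = 1} : Finset F).image (fun t => (t • u, t • v)) ∪
        ({t | t ^ 2 = -1} : Finset F).image (fun t => (t • u, -(t • (u + v)))) := by
    ext ⟨u', v'⟩
    simp only [mem_filter, mem_univ, true_and, mem_union, mem_image, Prod.mk.injEq]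
    constructor
    · rintro ⟨hd, he⟩
      obtain ⟨t, rfl, rfl | rfl⟩ := eq_smul_of_vecEdge_eq h (hd ▸ h) he
      · rw [det2_smul_smul] at hd
        exact Or.inl ⟨t, mul_right_cancel₀ h (by linear_combination hd), rfl, rfl⟩
      · rw [← smul_neg, det2_smul_smul, det2_neg_add_right] at hd
        exact Or.inr ⟨t, mul_right_cancel₀ h (by linear_combination -hd), rfl, rfl⟩
    · rintro (⟨t, ht, rfl, rfl⟩ | ⟨t, ht, rfl, rfl⟩)
      · have ht0 : t ≠ 0 := by rintro rfl; norm_num at ht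
        exact ⟨by rw [det2_smul_smul, ← sq, ht, one_mul], vecEdge_smul ht0 u v⟩
      · have ht0 : t ≠ 0 := by rintro rfl; norm_num at ht
        refine ⟨by rw [← smul_neg, det2_smul_smul, det2_neg_add_right, ← sq, ht]; ring, ?_⟩
        rw [smul_add, vecEdge_swap, vecEdge_smul ht0]
  have hinj {f : F → Fin 2 → F} : Function.Injective fun t : F => (t • u, f t) :=
    fun s t hst => smul_left_injective F hu (congrArg Prod.fst hst)
  have hdisj : Disjoint (({t | t ^ 2 = 1} : Finset F).image (fun t => (t • u, t • v)))
      (({t | t ^ 2 = -1} : Finset F).image (fun t => (t • u, -(t • (u + v))))) := by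
    simp only [disjoint_left, mem_image, mem_filter, mem_univ, true_and, not_exists, not_and]
    rintro _ ⟨s, hs, rfl⟩ t ht hst
    obtain rfl := smul_left_injective F hu (congrArg Prod.fst hst)
    exact Ring.neg_one_ne_one_of_char_ne_two hF (ht.symm.trans hs)
  rw [hfib, card_union_of_disjoint hdisj, card_image_of_injective _ hinj,
    card_image_of_injective _ hinj, card_sq_eq_of_isSquare hF one_ne_zero IsSquare.one,
    card_sq_eq_of_isSquare hF (neg_ne_zero.mpr one_ne_zero) hm1]

lemma ncard_edgesOfDet_mul_four (hF : ringChar F ≠ 2) (hm1 : IsSquare (-1 : F)) {d : F}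
    (hd : d ≠ 0) : (edgesOfDet d).ncard * 4 = (Fintype.card F ^ 2 - 1) * Fintype.card F := by
  set S : Finset ((Fin 2 → F) × (Fin 2 → F)) := {p | det2 p.1 p.2 = d}
  have hS : edgesOfDet d = ↑(S.image fun p => vecEdge p.1 p.2) := by
    ext e
    simp [edgesOfDet, S]
  rw [hS, Set.ncard_coe_finset, ← card_det2_eq hd,
    card_eq_sum_card_image (fun p => vecEdge p.1 p.2) S, sum_const_nat]
  rintro _ hb
  obtain ⟨⟨u, v⟩, hp, rfl⟩ := mem_image.mp hb
  obtain rfl := (mem_filter.mp hp).2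
  rw [filter_filter]
  exact card_vecEdge_fiber hF hm1 hd

end Counting

lemma sl2Map_eq_smul {F : Type*} [Field F] (g : SpecialLinearGroup (Fin 2) F) :
    sl2Map g = (g • ·) :=
  rfl

/-- Let `q ≡ 1 (mod 4)` be a prime power. Then `PSL(2,q)`, acting on unordered pairs
of points of the projective line `PG(1,q)`, has exactly two orbits on the edges of
the Johnson graph `J(q+1,2)` (pairs of `2`-subsets meeting in one point), and these
two orbits have equal size `q(q²−1)/4`.  (The orbits of `PSL(2,q)` on the projective
line coincide with the orbits of `SL(2,q)`, since scalars act trivially.) -/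
theorem psl2_two_orbits_on_johnson_edges (F : Type) [Field F] [Fintype F]
    (q : ℕ) (hq : Fintype.card F = q) (hq4 : q % 4 = 1) :
    ∀ _ : DecidableEq (ProjLine F), -- fix an instance
    ∃ O₁ O₂ : Set (Sym2 (Finset (ProjLine F))),
      Disjoint O₁ O₂ ∧ O₁.Nonempty ∧ O₂.Nonempty ∧
      O₁ ∪ O₂ = {e : Sym2 (Finset (ProjLine F)) | ∃ A B : Finset (ProjLine F),
        e = s(A, B) ∧ A.card = 2 ∧ B.card = 2 ∧ (A ∩ B).card = 1} ∧
      (∀ e ∈ O₁, ∀ e' : Sym2 (Finset (ProjLine F)),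
        (e' ∈ O₁ ↔ ∃ g : SpecialLinearGroup (Fin 2) F,
          e' = e.map (fun A => A.image (sl2Map g)))) ∧
      (∀ e ∈ O₂, ∀ e' : Sym2 (Finset (ProjLine F)),
        (e' ∈ O₂ ↔ ∃ g : SpecialLinearGroup (Fin 2) F,
          e' = e.map (fun A => A.image (sl2Map g)))) ∧
      O₁.ncard = q * (q ^ 2 - 1) / 4 ∧ O₂.ncard = q * (q ^ 2 - 1) / 4 := by
  intro _
  classical
  have hF : ringChar F ≠ 2 := fun h => by
    have := FiniteField.even_card_iff_char_two.mp h
    omega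
  have hm1 : IsSquare (-1 : F) := FiniteField.isSquare_neg_one_iff.mpr (by omega)
  obtain ⟨ε, hε⟩ := FiniteField.exists_nonsquare hF
  have hε0 : ε ≠ 0 := by rintro rfl; exact hε IsSquare.zero
  have hcard {d : F} (hd : d ≠ 0) : (edgesOfDet d).ncard = q * (q ^ 2 - 1) / 4 := by
    have := ncard_edgesOfDet_mul_four hF hm1 hd
    rw [hq, mul_comm (q ^ 2 - 1)] at this
    omega
  simp only [sl2Map_eq_smul]
  exact ⟨edgesOfDet 1, edgesOfDet ε, disjoint_edgesOfDet hm1 one_ne_zero IsSquare.one hε,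
    edgesOfDet_nonempty 1, edgesOfDet_nonempty ε, (johnsonEdges_eq_union hε).symm,
    fun _ he _ => mem_edgesOfDet_iff one_ne_zero he, fun _ he _ => mem_edgesOfDet_iff hε0 he,
    hcard one_ne_zero, hcard hε0⟩
end

section
/- Let q = q₀^r with r prime, and let H = PGL(2,q₀) ≤ PGL(2,q) acting on the projective line GF(q) ∪ {∞}. If r is odd then H acts semiregularly on GF(q) \ GF(q₀) (all point stabilisers in H of points of GF(q)\GF(q₀) are trivial), while if r = 2 then H acts transitively on GF(q) \ GF(q₀). -/
/-!
An element `z ∉ F₀` has degree `r = [F : F₀]` over `F₀`, since its degree divides the prime `r`.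
A fixed point `z` of `w ↦ (a w + b)/(c w + d)` is a root of `c X² + (d - a) X - b`; when `r` is
odd the degree of `z` exceeds `2`, so this polynomial vanishes and the map is the identity.
When `r = 2`, `1, z` is an `F₀`-basis of `F`, so every `w ∉ F₀` is `α z + β` with `α ≠ 0`,
an affine image of `z`.
-/

open Polynomial

namespace Subfield

variable {F : Type*} [Field F] (F₀ : Subfield F)

theorem finrank_eq_of_natCard_eq_pow [Finite F] {q₀ r : ℕ} (hq₀ : Nat.card F₀ = q₀)
    (hcard : Nat.card F = q₀ ^ r) : Module.finrank F₀ F = r := by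
  have hq₀_gt_one : 1 < q₀ := hq₀ ▸ Finite.one_lt_card
  rw [Module.natCard_eq_pow_finrank (K := F₀), hq₀] at hcard
  exact Nat.pow_right_injective hq₀_gt_one hcard

variable {F₀}

theorem natDegree_minpoly_eq_finrank_of_prime [FiniteDimensional F₀ F]
    (hr : (Module.finrank F₀ F).Prime) {z : F} (hz : z ∉ F₀) :
    (minpoly F₀ z).natDegree = Module.finrank F₀ F := by
  have hne_one : (minpoly F₀ z).natDegree ≠ 1 := by
    rw [Ne, minpoly.natDegree_eq_one_iff]
    rintro ⟨y, rfl⟩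
    exact hz y.2
  exact (hr.eq_one_or_self_of_dvd _ (minpoly.degree_dvd (.of_finite F₀ z))).resolve_left hne_one

theorem eq_zero_of_quadratic_eq_zero {z : F} (hz : 2 < (minpoly F₀ z).natDegree)
    {a b c : F} (ha : a ∈ F₀) (hb : b ∈ F₀) (hc : c ∈ F₀) (h : a * z ^ 2 + b * z + c = 0) :
    a = 0 ∧ b = 0 ∧ c = 0 := by
  set p : F₀[X] := C ⟨a, ha⟩ * X ^ 2 + C ⟨b, hb⟩ * X + C ⟨c, hc⟩
  have hp : p = 0 := by
    by_contra hp
    have hroot : aeval z p = 0 := by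
      simp only [p, map_add, map_mul, map_pow, aeval_C, aeval_X]
      exact h
    have hdeg : p.natDegree ≤ 2 := by simp only [p]; compute_degree
    have := natDegree_le_natDegree (minpoly.degree_le_of_ne_zero F₀ z hp hroot)
    omega
  have hcoeff (n : ℕ) : p.coeff n = 0 := by rw [hp, coeff_zero]
  refine ⟨?_, ?_, ?_⟩
  · simpa [p, Subtype.ext_iff] using hcoeff 2
  · simpa [p, Subtype.ext_iff] using hcoeff 1
  · simpa [p, Subtype.ext_iff] using hcoeff 0

theorem mobius_eq_id_of_fixed_point {z : F} (hz : 2 < (minpoly F₀ z).natDegree)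
    {a b c d : F} (ha : a ∈ F₀) (hb : b ∈ F₀) (hc : c ∈ F₀) (hd : d ∈ F₀)
    (hfix : a * z + b = (c * z + d) * z) : b = 0 ∧ c = 0 ∧ a = d := by
  obtain ⟨hc0, hda, hb0⟩ := eq_zero_of_quadratic_eq_zero hz hc (sub_mem hd ha) (neg_mem hb)
    (by linear_combination -hfix)
  exact ⟨neg_eq_zero.mp hb0, hc0, (sub_eq_zero.mp hda).symm⟩

theorem exists_eq_mul_add_of_finrank_eq_two (h2 : Module.finrank F₀ F = 2) {z : F} (hz : z ∉ F₀)
    (w : F) : ∃ α ∈ F₀, ∃ β ∈ F₀, α * z + β = w := by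
  have hli : LinearIndependent F₀ ![(1 : F), z] := by
    refine (LinearIndependent.pair_iff' one_ne_zero).mpr fun α hα => hz ?_
    rw [← hα, Algebra.smul_def, mul_one]
    exact α.2
  have hspan := hli.span_eq_top_of_card_eq_finrank (by simp [h2])
  have hw : w ∈ Submodule.span F₀ {1, z} := by
    rw [← Matrix.range_cons_cons_empty, hspan]
    trivial
  obtain ⟨β, α, hαβ⟩ := Submodule.mem_span_pair.mp hw
  refine ⟨α, α.2, β, β.2, ?_⟩
  rw [← hαβ, smul_def, smul_def, smul_eq_mul, smul_eq_mul, mul_one, add_comm]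

end Subfield

open Subfield in
/-- Let `q = q₀^r` with `r` prime, and let `H = PGL(2,q₀) ≤ PGL(2,q)` (fractional
linear maps `z ↦ (az+b)/(cz+d)` with `a,b,c,d ∈ GF(q₀)`, `ad−bc ≠ 0`) act on the
projective line `GF(q) ∪ {∞}`. If `r` is odd then `H` acts semiregularly on
`GF(q) \ GF(q₀)` (only the identity fractional linear map over `GF(q₀)` fixes a point
outside `GF(q₀)`), while if `r = 2` then `H` acts transitively on `GF(q) \ GF(q₀)`. -/
theorem subfield_subgroup_orbits (F : Type*) [Field F] [Fintype F]
    (F₀ : Subfield F) (q₀ r : ℕ) (hr : r.Prime)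
    (hq₀ : Nat.card F₀ = q₀) (hcard : Fintype.card F = q₀ ^ r) :
    (Odd r →
      ∀ a b c d : F, a ∈ F₀ → b ∈ F₀ → c ∈ F₀ → d ∈ F₀ → a * d - b * c ≠ 0 →
        ∀ z : F, z ∉ F₀ → a * z + b = (c * z + d) * z → (b = 0 ∧ c = 0 ∧ a = d)) ∧
    (r = 2 →
      ∀ z w : F, z ∉ F₀ → w ∉ F₀ →
        ∃ a b c d : F, a ∈ F₀ ∧ b ∈ F₀ ∧ c ∈ F₀ ∧ d ∈ F₀ ∧ a * d - b * c ≠ 0 ∧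
          c * z + d ≠ 0 ∧ a * z + b = w * (c * z + d)) := by
  have hfinrank : Module.finrank F₀ F = r :=
    finrank_eq_of_natCard_eq_pow F₀ hq₀ (Nat.card_eq_fintype_card.trans hcard)
  refine ⟨fun hodd a b c d ha hb hc hd _ z hz hfix => ?_, fun hr2 z w hz hw => ?_⟩
  · have hdeg := natDegree_minpoly_eq_finrank_of_prime (hfinrank ▸ hr) hz
    have hr3 : 2 < r :=
      hr.two_le.lt_of_ne (by rintro rfl; exact Nat.not_odd_iff_even.mpr even_two hodd)
    exact mobius_eq_id_of_fixed_point (by rwa [hdeg, hfinrank]) ha hb hc hd hfix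
  · obtain ⟨α, hα, β, hβ, rfl⟩ := exists_eq_mul_add_of_finrank_eq_two (hfinrank.trans hr2) hz w
    have hα0 : α ≠ 0 := by
      rintro rfl
      exact hw (by simpa using hβ)
    exact ⟨α, β, 0, 1, hα, hβ, F₀.zero_mem, F₀.one_mem, by simpa using hα0, by simp, by ring⟩
end
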